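/- Cipher-unbiasedness: let Φ be a random variable taking values in the permutations of {0,…,M−1} (defined on some probability space), and fix a symbol s ∈ {0,…,M−1}. If the induced bin index Φ(s) is uniformly distributed on {0,…,M−1}, then for every token y, E[p_wm(y | Φ(s))] = p₀(y). -/

import Mathlib

/-!
If the bin index `Φ(s)` is uniform, `E[M · μ(y, Φ(s))]` is the plain sum `∑ r, μ(y, r)`, and
since the quantile bins partition `[0, 1) ⊇ I(y)` this sum is `λ(I(y)) = p₀(y)`.
The integral is computed fibrewise because the outer masses of the fibres of `Φ(s)` add up to 1,
which makes each fibre measurable up to a null set (Carathéodory).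
-/

open MeasureTheory

/-- Cumulative sum of `p` over tokens strictly preceding `y`. -/
noncomputable def cdfBefore {V : Type*} [Fintype V] [LinearOrder V] (p : V → ℝ) (y : V) : ℝ :=
  ∑ z ∈ Finset.univ.filter (fun z => z < y), p z

/-- The CDF interval `I(y) = [F(y), F(y) + p(y))` of token `y`. -/
noncomputable def tokenInterval {V : Type*} [Fintype V] [LinearOrder V] (p : V → ℝ) (y : V) :
    Set ℝ :=
  Set.Ico (cdfBefore p y) (cdfBefore p y + p y)

/-- The `r`-th equal-width quantile bin `B_r = [r/M, (r+1)/M)`. -/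
noncomputable def quantileBin (M : ℕ) (r : ℕ) : Set ℝ :=
  Set.Ico ((r : ℝ) / M) (((r : ℝ) + 1) / M)

/-- Overlap mass `μ(y, r) = λ(I(y) ∩ B_r)`. -/
noncomputable def overlapMass {V : Type*} [Fintype V] [LinearOrder V] (p : V → ℝ) (M : ℕ)
    (y : V) (r : ℕ) : ℝ :=
  (volume (tokenInterval p y ∩ quantileBin M r)).toReal

open scoped ENNReal

open Set

section Fibers

variable {Ω : Type*} [MeasurableSpace Ω] {μ : Measure Ω}

theorem nullMeasurableSet_of_measure_add_measure_compl_le [IsFiniteMeasure μ] {A : Set Ω}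
    (h : μ A + μ Aᶜ ≤ μ univ) : NullMeasurableSet A μ := by
  set T := toMeasurable μ A
  set T' := toMeasurable μ Aᶜ
  have hcover : T ∪ T' = univ :=
    eq_univ_of_subset (union_subset_union (subset_toMeasurable μ A)
      (subset_toMeasurable μ Aᶜ)) (union_compl_self A)
  have hoverlap : μ (T ∩ T') = 0 := by
    have hadd := measure_union_add_inter (μ := μ) T (measurableSet_toMeasurable μ Aᶜ)
    rw [hcover, measure_toMeasurable, measure_toMeasurable] at hadd
    exact nonpos_iff_eq_zero.1 <| ENNReal.le_of_add_le_add_left (measure_ne_top μ univ) <| by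
      rw [add_zero, hadd]; exact h
  have hdiff : T \ A ⊆ T ∩ T' := fun ω hω ↦ ⟨hω.1, subset_toMeasurable μ Aᶜ hω.2⟩
  have hT : T =ᵐ[μ] A := ae_eq_set.2
    ⟨measure_mono_null hdiff hoverlap,
      by rw [sdiff_eq_empty.2 (subset_toMeasurable μ A), measure_empty]⟩
  exact (measurableSet_toMeasurable μ A).nullMeasurableSet.congr hT

variable {α : Type*} {X : Ω → α}

theorem measure_preimage_finset_le_sum (t : Finset α) :
    μ (X ⁻¹' t) ≤ ∑ a ∈ t, μ (X ⁻¹' {a}) := by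
  simpa [← preimage_iUnion₂] using measure_biUnion_finset_le t (fun a ↦ X ⁻¹' {a})

variable [Fintype α] [MeasurableSpace α]

theorem nullMeasurable_of_sum_measure_preimage_singleton_le [IsFiniteMeasure μ]
    (h : ∑ a, μ (X ⁻¹' {a}) ≤ μ univ) : NullMeasurable X μ := by
  classical
  intro s _
  apply nullMeasurableSet_of_measure_add_measure_compl_le
  calc μ (X ⁻¹' s) + μ (X ⁻¹' s)ᶜ
      = μ (X ⁻¹' s.toFinset) + μ (X ⁻¹' ↑(s.toFinset)ᶜ) := by simp
    _ ≤ ∑ a ∈ s.toFinset, μ (X ⁻¹' {a}) + ∑ a ∈ s.toFinsetᶜ, μ (X ⁻¹' {a}) :=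
      add_le_add (measure_preimage_finset_le_sum _) (measure_preimage_finset_le_sum _)
    _ = ∑ a, μ (X ⁻¹' {a}) := Finset.sum_add_sum_compl _ _
    _ ≤ μ univ := h

theorem integral_comp_eq_sum_of_sum_measure_preimage_singleton_le [IsFiniteMeasure μ]
    [MeasurableSingletonClass α] {E : Type*} [NormedAddCommGroup E] [NormedSpace ℝ E]
    [CompleteSpace E]
    (h : ∑ a, μ (X ⁻¹' {a}) ≤ μ univ) (f : α → E) :
    ∫ ω, f (X ω) ∂μ = ∑ a, μ.real (X ⁻¹' {a}) • f a := by
  have hX : AEMeasurable X μ :=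
    (nullMeasurable_of_sum_measure_preimage_singleton_le h).aemeasurable
  rw [← integral_map hX (Integrable.of_finite).aestronglyMeasurable,
    integral_fintype Integrable.of_finite]
  simp only [measureReal_def, Measure.map_apply_of_aemeasurable hX (measurableSet_singleton _)]

theorem integral_comp_eq_average_of_uniform [IsProbabilityMeasure μ] [MeasurableSingletonClass α]
    {E : Type*} [NormedAddCommGroup E] [NormedSpace ℝ E] [CompleteSpace E]
    (hunif : ∀ a, μ (X ⁻¹' {a}) = (Fintype.card α : ℝ≥0∞)⁻¹) (f : α → E) :
    ∫ ω, f (X ω) ∂μ = (Fintype.card α : ℝ)⁻¹ • ∑ a, f a := by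
  have h : ∑ a, μ (X ⁻¹' {a}) ≤ μ univ := by
    simp only [hunif, Finset.sum_const, Finset.card_univ, nsmul_eq_mul, measure_univ]
    exact ENNReal.mul_inv_le_one _
  rw [integral_comp_eq_sum_of_sum_measure_preimage_singleton_le h, Finset.smul_sum]
  simp [measureReal_def, hunif]

end Fibers

section QuantileBins

theorem pairwise_disjoint_quantileBin (M : ℕ) :
    Pairwise (Function.onFun Disjoint (quantileBin M)) := by
  have hmono : Monotone fun n : ℕ ↦ (n : ℝ) / M :=
    fun _ _ h ↦ div_le_div_of_nonneg_right (Nat.cast_le.2 h) M.cast_nonneg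
  have h := hmono.pairwise_disjoint_on_Ico_succ
  simp only [Order.succ_eq_add_one, Nat.cast_add_one] at h
  exact h

theorem iUnion_quantileBin {M : ℕ} (hM : 0 < M) :
    ⋃ r : Fin M, quantileBin M r = Ico 0 1 := by
  have hM' : (M : ℝ) ≠ 0 := by positivity
  refine subset_antisymm (iUnion_subset fun r ↦ Ico_subset_Ico ?_ ?_) ?_
  · positivity
  · rw [div_le_one (by positivity)]
    exact_mod_cast r.isLt
  · have hcover := Ico_subset_biUnion_Ico M fun n : ℕ ↦ (n : ℝ) / M
    simp only [Nat.cast_zero, zero_div, div_self hM', Nat.cast_add_one] at hcover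
    refine hcover.trans (iUnion₂_subset fun r hr ↦ ?_)
    exact subset_iUnion_of_subset ⟨r, Finset.mem_range.1 hr⟩ subset_rfl

theorem sum_volume_inter_quantileBin {M : ℕ} (hM : 0 < M) {S : Set ℝ} (hS : MeasurableSet S) :
    ∑ r : Fin M, volume (S ∩ quantileBin M r) = volume (S ∩ Ico 0 1) := by
  have hdisj : Pairwise (Function.onFun Disjoint fun r : Fin M ↦ S ∩ quantileBin M r) :=
    fun r r' hne ↦ ((pairwise_disjoint_quantileBin M) (Fin.val_injective.ne hne)).mono
      inter_subset_right inter_subset_right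
  rw [← iUnion_quantileBin hM, inter_iUnion, measure_iUnion hdisj
    (fun _ ↦ hS.inter measurableSet_Ico), tsum_fintype]

end QuantileBins

section TokenIntervals

variable {V : Type*} [Fintype V] [LinearOrder V] {p : V → ℝ}

theorem cdfBefore_add_le_sum (hp : ∀ y, 0 ≤ p y) (y : V) :
    cdfBefore p y + p y ≤ ∑ z, p z := by
  have hy : y ∉ Finset.univ.filter (· < y) := by simp
  calc cdfBefore p y + p y = ∑ z ∈ insert y (Finset.univ.filter (· < y)), p z := by
        rw [Finset.sum_insert hy, add_comm, cdfBefore]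
    _ ≤ ∑ z, p z := Finset.sum_le_univ_sum_of_nonneg hp

theorem tokenInterval_subset_Ico (hp : ∀ y, 0 ≤ p y) (hsum : ∑ y, p y = 1) (y : V) :
    tokenInterval p y ⊆ Ico 0 1 :=
  Ico_subset_Ico (Finset.sum_nonneg fun z _ ↦ hp z) (hsum ▸ cdfBefore_add_le_sum hp y)

theorem sum_overlapMass (hp : ∀ y, 0 ≤ p y) (hsum : ∑ y, p y = 1) {M : ℕ} (hM : 0 < M)
    (y : V) :
    ∑ r : Fin M, overlapMass p M y r = p y := by
  have hfinite : ∀ r : Fin M, volume (tokenInterval p y ∩ quantileBin M r) ≠ ∞ := fun r ↦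
    measure_ne_top_of_subset inter_subset_left (by simp [tokenInterval])
  simp only [overlapMass]
  rw [← ENNReal.toReal_sum fun r _ ↦ hfinite r,
    sum_volume_inter_quantileBin hM (S := tokenInterval p y) measurableSet_Ico,
    inter_eq_left.2 (tokenInterval_subset_Ico hp hsum y), tokenInterval, Real.volume_Ico,
    add_sub_cancel_left, ENNReal.toReal_ofReal (hp y)]

end TokenIntervals

/-- cipher-unbiasedness: let `Φ` be a random permutation of `{0, …, M−1}`
defined on a probability space, and fix a symbol `s`. If the induced bin index `Φ(s)` is
uniformly distributed on `{0, …, M−1}`, then for every token `y`,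
`E[p_wm(y | Φ(s))] = p₀(y)`. -/
theorem cipher_unbiasedness {V : Type*} [Fintype V] [LinearOrder V]
    (p₀ : V → ℝ) (hnn : ∀ y, 0 ≤ p₀ y) (hsum : ∑ y, p₀ y = 1)
    (M : ℕ) (hM : 1 ≤ M)
    {Ω : Type*} [MeasurableSpace Ω] (P : Measure Ω) [IsProbabilityMeasure P]
    (Φ : Ω → Equiv.Perm (Fin M)) (s : Fin M)
    (hunif : ∀ r : Fin M, P {ω | Φ ω s = r} = (M : ℝ≥0∞)⁻¹) :
    ∀ y : V, ∫ ω, (M : ℝ) * overlapMass p₀ M y ((Φ ω s : Fin M) : ℕ) ∂P = p₀ y := by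
  intro y
  have hM' : (M : ℝ) ≠ 0 := by positivity
  have hunif' : ∀ r, P ((Φ · s) ⁻¹' {r}) = (Fintype.card (Fin M) : ℝ≥0∞)⁻¹ := fun r ↦ by
    rw [Fintype.card_fin]; exact hunif r
  rw [integral_comp_eq_average_of_uniform hunif' fun r ↦ (M : ℝ) * overlapMass p₀ M y r,
    Fintype.card_fin, ← Finset.mul_sum, sum_overlapMass hnn hsum hM, smul_eq_mul,
    inv_mul_cancel_left₀ hM']
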